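/- arXiv:2302.03681 — 4 statements merged into one kernel-verified Lean document; each statement's English description precedes it below -/
import Mathlib

section
/- (Amiot) Let k be a field, T a k-linear triangulated category, N ⊆ T a thick triangulated subcategory which is Hom-finite, d an integer, and β a bilinear form of degree −d on N with pretrace forms t_N. Then the Verdier quotient T/N admits a unique bilinear form of degree 1−d whose pretrace form t^{T/N}_X at each object X satisfies the following: for every triangle N →a X' →s X →b ΣN in T with N in N and every morphism f : X' → Σ^{d−1}X in T, the value of t^{T/N}_X on the morphism of T/N represented by the fraction f ∘ s^{−1} equals t_N((Σ^{d−1} b) ∘ f ∘ a). (Here one uses that every morphism X → Σ^{d−1}X in the Verdier quotient T/N can be written as such a fraction f ∘ s^{−1}, s being a morphism whose cone lies in ΣN.) -/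
open CategoryTheory CategoryTheory.Limits Pretriangulated

namespace CategoryTheory.Triangulated

/-- The structure `Triangulated.Subcategory` of the older Mathlib (removed since), restored
with its old fields and meaning. -/
structure Subcategory (C : Type*) [Category C] [HasZeroObject C] [HasShift C ℤ]
    [Preadditive C] [∀ n : ℤ, (shiftFunctor C n).Additive] [Pretriangulated C] where
  P : C → Prop
  zero' : ∃ (Z : C) (_ : IsZero Z), P Z
  shift (X : C) (n : ℤ) : P X → P (X⟦n⟧)
  ext₂' (T : Triangle C) (_ : T ∈ distTriang C) : P T.obj₁ → P T.obj₃ →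
    ∃ (Y : C) (_ : P Y), Nonempty (T.obj₂ ≅ Y)

namespace Subcategory

variable {C : Type*} [Category C] [HasZeroObject C] [HasShift C ℤ]
  [Preadditive C] [∀ n : ℤ, (shiftFunctor C n).Additive] [Pretriangulated C]
  (S : Subcategory C)

/-- The class of morphisms whose cone satisfies `S.P` (old `Subcategory.W`). -/
def W : MorphismProperty C := fun X Y f => ∃ (Z : C) (g : Y ⟶ Z) (h : Z ⟶ X⟦(1 : ℤ)⟧)
  (_ : Triangle.mk f g h ∈ distTriang C), S.P Z

end Subcategory

namespace Subcategory

variable {C : Type*} [Category C] [HasZeroObject C] [HasShift C ℤ]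
  [Preadditive C] [∀ n : ℤ, (shiftFunctor C n).Additive] [Pretriangulated C]
  (S : Subcategory C)

instance instIsTriangulatedP : ObjectProperty.IsTriangulated S.P where
  exists_zero := by
    obtain ⟨Z, hZ, h⟩ := S.zero'
    exact ⟨Z, hZ, h⟩
  isStableUnderShiftBy a := ⟨fun X hX => S.shift X a hX⟩
  ext₂' T hT h₁ h₃ := by
    obtain ⟨Y, hY, e⟩ := S.ext₂' T hT h₁ h₃
    exact ⟨Y, hY, e⟩

lemma W_eq_trW : S.W = ObjectProperty.trW S.P := rfl

lemma W_iff' {Y Z : C} (g : Y ⟶ Z) :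
    S.W g ↔ ∃ (X : C) (f : X ⟶ Y) (h : Z ⟶ X⟦(1 : ℤ)⟧)
      (_ : Triangle.mk f g h ∈ distTriang C), S.P X :=
  ObjectProperty.trW_iff' S.P g

lemma W.mk' {T : Triangle C} (hT : T ∈ distTriang C) (h : S.P T.obj₁) : S.W T.mor₂ :=
  ObjectProperty.trW.mk' S.P hT h

instance instIsMultiplicativeW [IsTriangulated C] : S.W.IsMultiplicative :=
  inferInstanceAs (ObjectProperty.trW S.P).IsMultiplicative

instance instHasRightCalculusOfFractionsW [IsTriangulated C] :
    S.W.HasRightCalculusOfFractions :=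
  inferInstanceAs (ObjectProperty.trW S.P).HasRightCalculusOfFractions

end Subcategory

end CategoryTheory.Triangulated

namespace AmiotAux

variable {k : Type*} [Field k]
variable {T : Type*} [Category T] [Preadditive T] [CategoryTheory.Linear k T] [HasZeroObject T]
  [HasShift T ℤ] [∀ n : ℤ, (shiftFunctor T n).Additive]
  [∀ n : ℤ, Functor.Linear k (shiftFunctor T n)]
  [Pretriangulated T] [IsTriangulated T]
variable (N : Triangulated.Subcategory T) (d : ℤ)
variable (β : ∀ X Y : T, N.P X → N.P Y → ((X ⟶ Y) →ₗ[k] (Y ⟶ X⟦d⟧) →ₗ[k] k))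

section

variable (hβ₁ : ∀ (X0 X1 X2 : T) (h0 : N.P X0) (h1 : N.P X1) (h2 : N.P X2)
      (u : X0 ⟶ X1) (f : X1 ⟶ X2) (g : X2 ⟶ X0⟦d⟧),
      β X0 X2 h0 h2 (u ≫ f) g = β X1 X2 h1 h2 f (g ≫ u⟦d⟧'))
variable (hβ₂ : ∀ (X1 X2 X3 : T) (h1 : N.P X1) (h2 : N.P X2) (h3 : N.P X3)
      (f : X1 ⟶ X2) (v : X2 ⟶ X3) (g : X3 ⟶ X1⟦d⟧),
      β X1 X3 h1 h3 (f ≫ v) g = β X1 X2 h1 h2 f (v ≫ g))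

include hβ₁ hβ₂ in
lemma cyc {M P : T} (hM : N.P M) (hP : N.P P) (c : M ⟶ P) (q : P ⟶ M⟦d⟧) :
    β M M hM hM (𝟙 M) (c ≫ q) = β P P hP hP (𝟙 P) (q ≫ c⟦d⟧') := by
  calc β M M hM hM (𝟙 M) (c ≫ q) = β M P hM hP (𝟙 M ≫ c) q :=
        (hβ₂ M M P hM hM hP (𝟙 M) c q).symm
    _ = β M P hM hP (c ≫ 𝟙 P) q := by rw [Category.id_comp, Category.comp_id]
    _ = β P P hP hP (𝟙 P) (q ≫ c⟦d⟧') := hβ₁ M P P hM hP hP c (𝟙 P) q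

include hβ₁ hβ₂ in
lemma keyB {N₁ X₁' X₁ N₂ X₂' X₂ : T} (hN₁ : N.P N₁) (hN₂ : N.P N₂)
    (a₁ : N₁ ⟶ X₁') (s₁ : X₁' ⟶ X₁) (b₁ : X₁ ⟶ N₁⟦(1 : ℤ)⟧)
    (hT₁ : Triangle.mk a₁ s₁ b₁ ∈ distTriang T)
    (a₂ : N₂ ⟶ X₂') (s₂ : X₂' ⟶ X₂) (b₂ : X₂ ⟶ N₂⟦(1 : ℤ)⟧)
    (hT₂ : Triangle.mk a₂ s₂ b₂ ∈ distTriang T)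
    (t : X₂' ⟶ X₁') (c : X₂ ⟶ X₁) (hcomm : s₂ ≫ c = t ≫ s₁) (h : X₁' ⟶ X₂⟦(d - 1 : ℤ)⟧) :
    β N₂ N₂ hN₂ hN₂ (𝟙 N₂) (a₂ ≫ (t ≫ h) ≫ b₂⟦(d - 1 : ℤ)⟧' ≫
        (shiftFunctorAdd' T 1 (d - 1) d (add_sub_cancel 1 d)).inv.app N₂)
      = β N₁ N₁ hN₁ hN₁ (𝟙 N₁) (a₁ ≫ (h ≫ c⟦(d - 1 : ℤ)⟧') ≫ b₁⟦(d - 1 : ℤ)⟧' ≫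
        (shiftFunctorAdd' T 1 (d - 1) d (add_sub_cancel 1 d)).inv.app N₁) := by
  obtain ⟨w, hw₁, hw₂⟩ : ∃ w : N₂ ⟶ N₁, a₂ ≫ t = w ≫ a₁ ∧ b₂ ≫ w⟦(1 : ℤ)⟧' = c ≫ b₁ :=
    complete_distinguished_triangle_morphism₁ (Triangle.mk a₂ s₂ b₂)
    (Triangle.mk a₁ s₁ b₁) hT₂ hT₁ t c hcomm
  have hnat : (shiftFunctorAdd' T 1 (d - 1) d (add_sub_cancel 1 d)).inv.app N₂ ≫ w⟦d⟧'
      = (w⟦(1 : ℤ)⟧')⟦(d - 1 : ℤ)⟧' ≫ (shiftFunctorAdd' T 1 (d - 1) d (add_sub_cancel 1 d)).inv.app N₁ :=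
    ((shiftFunctorAdd' T 1 (d - 1) d (add_sub_cancel 1 d)).inv.naturality w).symm
  have step1 : a₂ ≫ (t ≫ h) ≫ b₂⟦(d - 1 : ℤ)⟧' ≫
        (shiftFunctorAdd' T 1 (d - 1) d (add_sub_cancel 1 d)).inv.app N₂
      = w ≫ (a₁ ≫ h ≫ b₂⟦(d - 1 : ℤ)⟧' ≫
        (shiftFunctorAdd' T 1 (d - 1) d (add_sub_cancel 1 d)).inv.app N₂) := by
    simp only [← Category.assoc]
    rw [hw₁]
  have step2 : (a₁ ≫ h ≫ b₂⟦(d - 1 : ℤ)⟧' ≫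
        (shiftFunctorAdd' T 1 (d - 1) d (add_sub_cancel 1 d)).inv.app N₂) ≫ w⟦d⟧'
      = a₁ ≫ (h ≫ c⟦(d - 1 : ℤ)⟧') ≫ b₁⟦(d - 1 : ℤ)⟧' ≫
        (shiftFunctorAdd' T 1 (d - 1) d (add_sub_cancel 1 d)).inv.app N₁ := by
    simp only [Category.assoc, hnat]
    simp only [← Functor.map_comp_assoc]
    rw [hw₂]
  rw [step1, cyc N d β hβ₁ hβ₂ hN₂ hN₁ w
    (a₁ ≫ h ≫ b₂⟦(d - 1 : ℤ)⟧' ≫ (shiftFunctorAdd' T 1 (d - 1) d (add_sub_cancel 1 d)).inv.app N₂), step2]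

end

section

variable {D : Type*} [Category D] [Preadditive D] [CategoryTheory.Linear k D]
  [HasShift D ℤ] [∀ n : ℤ, (shiftFunctor D n).Additive]
  [∀ n : ℤ, Functor.Linear k (shiftFunctor D n)]
variable (Q : T ⥤ D) [Q.CommShift ℤ] [Q.Additive] [Q.Linear k] [Q.IsLocalization N.W]

lemma exists_frac (X Y : T) (g : Q.obj X ⟶ Q.obj Y) :
    ∃ (X₀ : T) (s : X₀ ⟶ X) (_ : N.W s) (f : X₀ ⟶ Y), Q.map s ≫ g = Q.map f := by
  obtain ⟨φ, hφ⟩ := Localization.exists_rightFraction Q N.W g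
  exact ⟨_, φ.s, φ.hs, φ.f, by
    rw [hφ]; exact φ.map_s_comp_map Q (Localization.inverts Q N.W)⟩

lemma exists_tri {X' X : T} (s : X' ⟶ X) (hs : N.W s) :
    ∃ (NN : T) (_ : N.P NN) (a : NN ⟶ X') (b : X ⟶ NN⟦(1 : ℤ)⟧),
      Triangle.mk a s b ∈ distTriang T := by
  rw [Triangulated.Subcategory.W_iff'] at hs
  obtain ⟨NN, a, b, hT, hNN⟩ := hs
  exact ⟨NN, hNN, a, b, hT⟩

lemma ore {X Y Y₀ : T} (u : X ⟶ Y) (t : Y₀ ⟶ Y) (ht : N.W t) :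
    ∃ (X₀ : T) (t' : X₀ ⟶ X) (_ : N.W t') (u' : X₀ ⟶ Y₀), t' ≫ u = u' ≫ t := by
  obtain ⟨ψ, hψ⟩ := MorphismProperty.HasRightCalculusOfFractions.exists_rightFraction
    (MorphismProperty.LeftFraction.mk u t ht)
  exact ⟨_, ψ.s, ψ.hs, ψ.f, hψ⟩

lemma frac_rel {X Y X₁' X₂' : T} (s₁ : X₁' ⟶ X) (hs₁ : N.W s₁) (f₁ : X₁' ⟶ Y)
    (s₂ : X₂' ⟶ X) (hs₂ : N.W s₂) (f₂ : X₂' ⟶ Y) (g : Q.obj X ⟶ Q.obj Y)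
    (h₁ : Q.map s₁ ≫ g = Q.map f₁) (h₂ : Q.map s₂ ≫ g = Q.map f₂) :
    ∃ (Z : T) (t₁ : Z ⟶ X₁') (t₂ : Z ⟶ X₂'),
      t₁ ≫ s₁ = t₂ ≫ s₂ ∧ t₁ ≫ f₁ = t₂ ≫ f₂ ∧ N.W (t₁ ≫ s₁) := by
  haveI : IsIso (Q.map s₁) := Localization.inverts Q N.W s₁ hs₁
  haveI : IsIso (Q.map s₂) := Localization.inverts Q N.W s₂ hs₂
  have e₁ : (MorphismProperty.RightFraction.mk s₁ hs₁ f₁).map Q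
      (Localization.inverts Q N.W) = g := by
    apply (cancel_epi (Q.map s₁)).1
    exact ((MorphismProperty.RightFraction.mk s₁ hs₁ f₁).map_s_comp_map Q
      (Localization.inverts Q N.W)).trans h₁.symm
  have e₂ : (MorphismProperty.RightFraction.mk s₂ hs₂ f₂).map Q
      (Localization.inverts Q N.W) = g := by
    apply (cancel_epi (Q.map s₂)).1
    exact ((MorphismProperty.RightFraction.mk s₂ hs₂ f₂).map_s_comp_map Q
      (Localization.inverts Q N.W)).trans h₂.symm
  have rel := (MorphismProperty.RightFraction.map_eq_iff Q N.W
    (MorphismProperty.RightFraction.mk s₁ hs₁ f₁)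
    (MorphismProperty.RightFraction.mk s₂ hs₂ f₂)).1 (e₁.trans e₂.symm)
  obtain ⟨Z, t₁, t₂, hst, hft, ht⟩ := rel
  exact ⟨Z, t₁, t₂, hst, hft, ht⟩

variable (hβ₁ : ∀ (X0 X1 X2 : T) (h0 : N.P X0) (h1 : N.P X1) (h2 : N.P X2)
      (u : X0 ⟶ X1) (f : X1 ⟶ X2) (g : X2 ⟶ X0⟦d⟧),
      β X0 X2 h0 h2 (u ≫ f) g = β X1 X2 h1 h2 f (g ≫ u⟦d⟧'))
variable (hβ₂ : ∀ (X1 X2 X3 : T) (h1 : N.P X1) (h2 : N.P X2) (h3 : N.P X3)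
      (f : X1 ⟶ X2) (v : X2 ⟶ X3) (g : X3 ⟶ X1⟦d⟧),
      β X1 X3 h1 h3 (f ≫ v) g = β X1 X2 h1 h2 f (v ≫ g))

include hβ₁ hβ₂ in
lemma welldef {X : T} (g : Q.obj X ⟶ (Q.obj X)⟦(d - 1 : ℤ)⟧)
    {NN₁ X₁' : T} (hNN₁ : N.P NN₁) (a₁ : NN₁ ⟶ X₁') (s₁ : X₁' ⟶ X) (b₁ : X ⟶ NN₁⟦(1 : ℤ)⟧)
    (hT₁ : Triangle.mk a₁ s₁ b₁ ∈ distTriang T) (f₁ : X₁' ⟶ X⟦(d - 1 : ℤ)⟧)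
    (hg₁ : Q.map s₁ ≫ g = Q.map f₁ ≫ (Q.commShiftIso (d - 1 : ℤ)).hom.app X)
    {NN₂ X₂' : T} (hNN₂ : N.P NN₂) (a₂ : NN₂ ⟶ X₂') (s₂ : X₂' ⟶ X) (b₂ : X ⟶ NN₂⟦(1 : ℤ)⟧)
    (hT₂ : Triangle.mk a₂ s₂ b₂ ∈ distTriang T) (f₂ : X₂' ⟶ X⟦(d - 1 : ℤ)⟧)
    (hg₂ : Q.map s₂ ≫ g = Q.map f₂ ≫ (Q.commShiftIso (d - 1 : ℤ)).hom.app X) :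
    β NN₁ NN₁ hNN₁ hNN₁ (𝟙 NN₁) (a₁ ≫ f₁ ≫ b₁⟦(d - 1 : ℤ)⟧' ≫
        (shiftFunctorAdd' T 1 (d - 1) d (add_sub_cancel 1 d)).inv.app NN₁)
      = β NN₂ NN₂ hNN₂ hNN₂ (𝟙 NN₂) (a₂ ≫ f₂ ≫ b₂⟦(d - 1 : ℤ)⟧' ≫
        (shiftFunctorAdd' T 1 (d - 1) d (add_sub_cancel 1 d)).inv.app NN₂) := by
  have hs₁ : N.W s₁ := Triangulated.Subcategory.W.mk' N hT₁ hNN₁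
  have hs₂ : N.W s₂ := Triangulated.Subcategory.W.mk' N hT₂ hNN₂
  have hg₁' : Q.map s₁ ≫ g ≫ (Q.commShiftIso (d - 1 : ℤ)).inv.app X = Q.map f₁ := by
    rw [← Category.assoc, hg₁, Category.assoc, Iso.hom_inv_id_app]
    exact Category.comp_id _
  have hg₂' : Q.map s₂ ≫ g ≫ (Q.commShiftIso (d - 1 : ℤ)).inv.app X = Q.map f₂ := by
    rw [← Category.assoc, hg₂, Category.assoc, Iso.hom_inv_id_app]
    exact Category.comp_id _
  obtain ⟨Z, t₁, t₂, hst, hft, htW⟩ := frac_rel N Q s₁ hs₁ f₁ s₂ hs₂ f₂ _ hg₁' hg₂'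
  obtain ⟨NN₃, hNN₃, a₃, b₃, hT₃⟩ := exists_tri N (t₁ ≫ s₁) htW
  have e₁ := keyB N d β hβ₁ hβ₂ hNN₁ hNN₃ a₁ s₁ b₁ hT₁ a₃ (t₁ ≫ s₁) b₃ hT₃ t₁ (𝟙 X)
    (by rw [Category.comp_id]) f₁
  have hT₃' : Triangle.mk a₃ (t₂ ≫ s₂) b₃ ∈ distTriang T := by rwa [← hst]
  have e₂ := keyB N d β hβ₁ hβ₂ hNN₂ hNN₃ a₂ s₂ b₂ hT₂ a₃ (t₂ ≫ s₂) b₃ hT₃' t₂ (𝟙 X)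
    (by rw [Category.comp_id]) f₂
  have h₁ : f₁ ≫ (𝟙 X)⟦(d - 1 : ℤ)⟧' = f₁ := by
    rw [CategoryTheory.Functor.map_id]
    exact Category.comp_id _
  have h₂ : f₂ ≫ (𝟙 X)⟦(d - 1 : ℤ)⟧' = f₂ := by
    rw [CategoryTheory.Functor.map_id]
    exact Category.comp_id _
  rw [h₁] at e₁
  rw [h₂] at e₂
  rw [← e₁, hft, e₂]

include hβ₁ hβ₂ in
lemma exists_tau :
    ∃ τ : ∀ X : T, (Q.obj X ⟶ (Q.obj X)⟦(d - 1 : ℤ)⟧) → k,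
      ∀ (X : T) (g : Q.obj X ⟶ (Q.obj X)⟦(d - 1 : ℤ)⟧)
        (NN X' : T) (hNN : N.P NN) (a : NN ⟶ X') (s : X' ⟶ X) (b : X ⟶ NN⟦(1 : ℤ)⟧),
        Triangle.mk a s b ∈ (distTriang T) →
        ∀ (f : X' ⟶ X⟦(d - 1 : ℤ)⟧),
          Q.map s ≫ g = Q.map f ≫ (Q.commShiftIso (d - 1 : ℤ)).hom.app X →
          τ X g = β NN NN hNN hNN (𝟙 NN) (a ≫ f ≫ b⟦(d - 1 : ℤ)⟧' ≫
            (shiftFunctorAdd' T 1 (d - 1) d (add_sub_cancel 1 d)).inv.app NN) := by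
  have H : ∀ (X : T) (g : Q.obj X ⟶ (Q.obj X)⟦(d - 1 : ℤ)⟧), ∃ v : k,
      ∀ (NN X' : T) (hNN : N.P NN) (a : NN ⟶ X') (s : X' ⟶ X) (b : X ⟶ NN⟦(1 : ℤ)⟧),
        Triangle.mk a s b ∈ (distTriang T) →
        ∀ (f : X' ⟶ X⟦(d - 1 : ℤ)⟧),
          Q.map s ≫ g = Q.map f ≫ (Q.commShiftIso (d - 1 : ℤ)).hom.app X →
          v = β NN NN hNN hNN (𝟙 NN) (a ≫ f ≫ b⟦(d - 1 : ℤ)⟧' ≫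
            (shiftFunctorAdd' T 1 (d - 1) d (add_sub_cancel 1 d)).inv.app NN) := by
    intro X g
    obtain ⟨X₀, s₀, hs₀, f₀, h₀⟩ := exists_frac N Q X (X⟦(d - 1 : ℤ)⟧)
      (g ≫ (Q.commShiftIso (d - 1 : ℤ)).inv.app X)
    obtain ⟨NN₀, hNN₀, a₀, b₀, hT₀⟩ := exists_tri N s₀ hs₀
    have hg₀ : Q.map s₀ ≫ g = Q.map f₀ ≫ (Q.commShiftIso (d - 1 : ℤ)).hom.app X := by
      rw [← h₀, Category.assoc, Category.assoc, Iso.inv_hom_id_app]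
      congr 1
      exact (Category.comp_id g).symm
    refine ⟨β NN₀ NN₀ hNN₀ hNN₀ (𝟙 NN₀) (a₀ ≫ f₀ ≫ b₀⟦(d - 1 : ℤ)⟧' ≫
      (shiftFunctorAdd' T 1 (d - 1) d (add_sub_cancel 1 d)).inv.app NN₀), ?_⟩
    intro NN X' hNN a s b hT f hg
    exact welldef N d β Q hβ₁ hβ₂ g hNN₀ a₀ s₀ b₀ hT₀ f₀ hg₀ hNN a s b hT f hg
  choose τ hτ using H
  exact ⟨τ, hτ⟩

lemma exists_sys (X : T) (g : Q.obj X ⟶ (Q.obj X)⟦(d - 1 : ℤ)⟧) :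
    ∃ (NN X' : T) (hNN : N.P NN) (a : NN ⟶ X') (s : X' ⟶ X) (b : X ⟶ NN⟦(1 : ℤ)⟧)
      (_ : Triangle.mk a s b ∈ distTriang T) (f : X' ⟶ X⟦(d - 1 : ℤ)⟧),
      Q.map s ≫ g = Q.map f ≫ (Q.commShiftIso (d - 1 : ℤ)).hom.app X := by
  obtain ⟨X₀, s₀, hs₀, f₀, h₀⟩ := exists_frac N Q X (X⟦(d - 1 : ℤ)⟧)
    (g ≫ (Q.commShiftIso (d - 1 : ℤ)).inv.app X)
  obtain ⟨NN₀, hNN₀, a₀, b₀, hT₀⟩ := exists_tri N s₀ hs₀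
  refine ⟨NN₀, X₀, hNN₀, a₀, s₀, b₀, hT₀, f₀, ?_⟩
  rw [← h₀, Category.assoc, Category.assoc, Iso.inv_hom_id_app]
  congr 1
  exact (Category.comp_id g).symm

section Tau

variable (τ : ∀ X : T, (Q.obj X ⟶ (Q.obj X)⟦(d - 1 : ℤ)⟧) → k)
variable (hτ : ∀ (X : T) (g : Q.obj X ⟶ (Q.obj X)⟦(d - 1 : ℤ)⟧)
      (NN X' : T) (hNN : N.P NN) (a : NN ⟶ X') (s : X' ⟶ X) (b : X ⟶ NN⟦(1 : ℤ)⟧),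
      Triangle.mk a s b ∈ (distTriang T) →
      ∀ (f : X' ⟶ X⟦(d - 1 : ℤ)⟧),
        Q.map s ≫ g = Q.map f ≫ (Q.commShiftIso (d - 1 : ℤ)).hom.app X →
        τ X g = β NN NN hNN hNN (𝟙 NN) (a ≫ f ≫ b⟦(d - 1 : ℤ)⟧' ≫
          (shiftFunctorAdd' T 1 (d - 1) d (add_sub_cancel 1 d)).inv.app NN))

include hτ in
lemma tau_add (X : T) (g g' : Q.obj X ⟶ (Q.obj X)⟦(d - 1 : ℤ)⟧) :
    τ X (g + g') = τ X g + τ X g' := by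
  obtain ⟨NN₁, X₁', hNN₁, a₁, s₁, b₁, hT₁, f₁, hg₁⟩ := exists_sys N d Q X g
  obtain ⟨NN₂, X₂', hNN₂, a₂, s₂, b₂, hT₂, f₂, hg₂⟩ := exists_sys N d Q X g'
  have hs₁ : N.W s₁ := Triangulated.Subcategory.W.mk' N hT₁ hNN₁
  have hs₂ : N.W s₂ := Triangulated.Subcategory.W.mk' N hT₂ hNN₂
  obtain ⟨Z, t', ht', u', hsq⟩ := ore N s₁ s₂ hs₂
  have hsW : N.W (t' ≫ s₁) := N.W.comp_mem _ _ ht' hs₁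
  obtain ⟨NN₃, hNN₃, a₃, b₃, hT₃⟩ := exists_tri N (t' ≫ s₁) hsW
  have hG : Q.map (t' ≫ s₁) ≫ g = Q.map (t' ≫ f₁) ≫ (Q.commShiftIso (d - 1 : ℤ)).hom.app X := by
    rw [Q.map_comp, Q.map_comp, Category.assoc, hg₁, Category.assoc]
  have hG' : Q.map (t' ≫ s₁) ≫ g' = Q.map (u' ≫ f₂) ≫ (Q.commShiftIso (d - 1 : ℤ)).hom.app X := by
    rw [hsq, Q.map_comp, Q.map_comp, Category.assoc, hg₂, Category.assoc]
  have hGsum : Q.map (t' ≫ s₁) ≫ (g + g')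
      = Q.map (t' ≫ f₁ + u' ≫ f₂) ≫ (Q.commShiftIso (d - 1 : ℤ)).hom.app X := by
    rw [Preadditive.comp_add, hG, hG', Q.map_add, Preadditive.add_comp]
  rw [hτ X g NN₃ Z hNN₃ a₃ (t' ≫ s₁) b₃ hT₃ (t' ≫ f₁) hG,
    hτ X g' NN₃ Z hNN₃ a₃ (t' ≫ s₁) b₃ hT₃ (u' ≫ f₂) hG',
    hτ X (g + g') NN₃ Z hNN₃ a₃ (t' ≫ s₁) b₃ hT₃ (t' ≫ f₁ + u' ≫ f₂) hGsum]
  rw [Preadditive.add_comp, Preadditive.comp_add, map_add]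

include hτ in
lemma tau_smul (X : T) (c : k) (g : Q.obj X ⟶ (Q.obj X)⟦(d - 1 : ℤ)⟧) :
    τ X (c • g) = c • τ X g := by
  obtain ⟨NN₁, X₁', hNN₁, a₁, s₁, b₁, hT₁, f₁, hg₁⟩ := exists_sys N d Q X g
  have hGs : Q.map s₁ ≫ (c • g) = Q.map (c • f₁) ≫ (Q.commShiftIso (d - 1 : ℤ)).hom.app X := by
    rw [CategoryTheory.Linear.comp_smul, hg₁, Q.map_smul, CategoryTheory.Linear.smul_comp]
  rw [hτ X g NN₁ X₁' hNN₁ a₁ s₁ b₁ hT₁ f₁ hg₁,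
    hτ X (c • g) NN₁ X₁' hNN₁ a₁ s₁ b₁ hT₁ (c • f₁) hGs,
    CategoryTheory.Linear.smul_comp, CategoryTheory.Linear.comp_smul, map_smul]

include hβ₁ hβ₂ hτ in
lemma tau_comm (X Y : T) (u : X ⟶ Y) (q : Q.obj Y ⟶ (Q.obj X)⟦(d - 1 : ℤ)⟧) :
    τ X (Q.map u ≫ q) = τ Y (q ≫ (Q.map u)⟦(d - 1 : ℤ)⟧') := by
  obtain ⟨Y₀, t, ht, h, hth⟩ := exists_frac N Q Y (X⟦(d - 1 : ℤ)⟧)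
    (q ≫ (Q.commShiftIso (d - 1 : ℤ)).inv.app X)
  obtain ⟨X₀, t', ht', u', hsq⟩ := ore N u t ht
  obtain ⟨P, hP, ar, br, hTr⟩ := exists_tri N t ht
  obtain ⟨M, hM, al, bl, hTl⟩ := exists_tri N t' ht'
  have hq : Q.map t ≫ q = Q.map h ≫ (Q.commShiftIso (d - 1 : ℤ)).hom.app X := by
    rw [← hth, Category.assoc, Category.assoc, Iso.inv_hom_id_app]
    congr 1
    exact (Category.comp_id q).symm
  have rel₁ : Q.map t' ≫ (Q.map u ≫ q)
      = Q.map (u' ≫ h) ≫ (Q.commShiftIso (d - 1 : ℤ)).hom.app X := by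
    rw [← Category.assoc, ← Q.map_comp, hsq, Q.map_comp, Category.assoc, hq, ← Category.assoc,
      ← Q.map_comp]
  have rel₂ : Q.map t ≫ (q ≫ (Q.map u)⟦(d - 1 : ℤ)⟧')
      = Q.map (h ≫ u⟦(d - 1 : ℤ)⟧') ≫ (Q.commShiftIso (d - 1 : ℤ)).hom.app Y := by
    have hnatu : (Q.commShiftIso (d - 1 : ℤ)).hom.app X ≫ (Q.map u)⟦(d - 1 : ℤ)⟧'
        = Q.map (u⟦(d - 1 : ℤ)⟧') ≫ (Q.commShiftIso (d - 1 : ℤ)).hom.app Y :=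
      ((Q.commShiftIso (d - 1 : ℤ)).hom.naturality u).symm
    rw [← Category.assoc, hq, Category.assoc, hnatu, ← Category.assoc, ← Q.map_comp]
  rw [hτ X (Q.map u ≫ q) M X₀ hM al t' bl hTl (u' ≫ h) rel₁,
    hτ Y (q ≫ (Q.map u)⟦(d - 1 : ℤ)⟧') P Y₀ hP ar t br hTr (h ≫ u⟦(d - 1 : ℤ)⟧') rel₂]
  exact keyB N d β hβ₁ hβ₂ hP hM ar t br hTr al t' bl hTl u' u hsq h

include hβ₁ hβ₂ hτ in
lemma tau_cyc (X Y : T) (p : Q.obj X ⟶ Q.obj Y) (q : Q.obj Y ⟶ (Q.obj X)⟦(d - 1 : ℤ)⟧) :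
    τ X (p ≫ q) = τ Y (q ≫ p⟦(d - 1 : ℤ)⟧') := by
  obtain ⟨X₀, s, hs, f, hf⟩ := exists_frac N Q X Y p
  haveI : IsIso (Q.map s) := Localization.inverts Q N.W s hs
  have conj : τ X₀ (Q.map s ≫ (p ≫ q) ≫ (inv (Q.map s))⟦(d - 1 : ℤ)⟧') = τ X (p ≫ q) := by
    have := tau_comm N d β Q hβ₁ hβ₂ τ hτ X₀ X s ((p ≫ q) ≫ (inv (Q.map s))⟦(d - 1 : ℤ)⟧')
    rw [this, Category.assoc, ← Functor.map_comp, IsIso.inv_hom_id,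
      CategoryTheory.Functor.map_id]
    congr 1
    exact Category.comp_id _
  have e1 : Q.map s ≫ (p ≫ q) ≫ (inv (Q.map s))⟦(d - 1 : ℤ)⟧'
      = Q.map f ≫ (q ≫ (inv (Q.map s))⟦(d - 1 : ℤ)⟧') := by
    rw [← Category.assoc, ← Category.assoc, hf, Category.assoc]
  have e2 := tau_comm N d β Q hβ₁ hβ₂ τ hτ X₀ Y f (q ≫ (inv (Q.map s))⟦(d - 1 : ℤ)⟧')
  have e3 : (q ≫ (inv (Q.map s))⟦(d - 1 : ℤ)⟧') ≫ (Q.map f)⟦(d - 1 : ℤ)⟧'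
      = q ≫ p⟦(d - 1 : ℤ)⟧' := by
    rw [Category.assoc, ← Functor.map_comp]
    congr 2
    rw [IsIso.inv_comp_eq]
    exact hf.symm
  rw [← conj, e1, e2, e3]

end Tau

end

end AmiotAux

/-- **Amiot's construction of the bilinear form on the Verdier quotient.**
Let `k` be a field, `T` a `k`-linear triangulated category, `N ⊆ T` a thick (i.e. closed under
retracts) triangulated subcategory which is Hom-finite, `d` an integer and `β` a bilinear form of
degree `-d` on `N` (a family of `k`-bilinear maps `(X ⟶ Y) × (Y ⟶ X⟦d⟧) → k` compatible with
composition on both sides), with pretrace forms `t_X = β X X _ _ (𝟙 X)`.  Let `Q : T ⥤ D` be the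
Verdier quotient of `T` by `N`, i.e. the localization at the class `N.W` of morphisms whose cone
lies in `N`.  Then `D = T/N` admits a unique bilinear form `γ` of degree `1-d` whose pretrace form
at any object `X` sends the morphism of `T/N` represented by a fraction `f ∘ s⁻¹` — where
`NN →a X' →s X →b NN⟦1⟧` is a distinguished triangle with `NN` in `N` and `f : X' ⟶ X⟦d-1⟧` —
to `t_NN((Σ^{d-1} b) ∘ f ∘ a)`. -/
theorem amiot_bilinear_form_on_verdier_quotient
    (k : Type*) [Field k]
    (T : Type*) [Category T] [Preadditive T] [CategoryTheory.Linear k T] [HasZeroObject T]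
    [HasShift T ℤ] [∀ n : ℤ, (shiftFunctor T n).Additive]
    [∀ n : ℤ, Functor.Linear k (shiftFunctor T n)]
    [Pretriangulated T] [IsTriangulated T]
    (N : Triangulated.Subcategory T)
    -- `N` is thick, i.e. closed under retracts (direct summands):
    (thick : ∀ (X Z : T) (r : Z ⟶ X) (s : X ⟶ Z), s ≫ r = 𝟙 X → N.P Z → N.P X)
    -- `N` is Hom-finite:
    (homFinite : ∀ X Y : T, N.P X → N.P Y → FiniteDimensional k (X ⟶ Y))
    (d : ℤ)
    -- a bilinear form `β` of degree `-d` on `N`: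
    (β : ∀ X Y : T, N.P X → N.P Y → ((X ⟶ Y) →ₗ[k] (Y ⟶ X⟦d⟧) →ₗ[k] k))
    (hβ₁ : ∀ (X0 X1 X2 : T) (h0 : N.P X0) (h1 : N.P X1) (h2 : N.P X2)
      (u : X0 ⟶ X1) (f : X1 ⟶ X2) (g : X2 ⟶ X0⟦d⟧),
      β X0 X2 h0 h2 (u ≫ f) g = β X1 X2 h1 h2 f (g ≫ u⟦d⟧'))
    (hβ₂ : ∀ (X1 X2 X3 : T) (h1 : N.P X1) (h2 : N.P X2) (h3 : N.P X3)
      (f : X1 ⟶ X2) (v : X2 ⟶ X3) (g : X3 ⟶ X1⟦d⟧),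
      β X1 X3 h1 h3 (f ≫ v) g = β X1 X2 h1 h2 f (v ≫ g))
    -- the Verdier quotient `Q : T ⥤ D = T/N`:
    (D : Type*) [Category D] [Preadditive D] [CategoryTheory.Linear k D]
    [HasShift D ℤ] [∀ n : ℤ, (shiftFunctor D n).Additive]
    [∀ n : ℤ, Functor.Linear k (shiftFunctor D n)]
    (Q : T ⥤ D) [Q.CommShift ℤ] [Q.Additive] [Q.Linear k] [Q.IsLocalization N.W] :
    -- there is a unique bilinear form `γ` of degree `1-d` on `T/N` with the stated pretraces:
    ∃! γ : ∀ X Y : D, (X ⟶ Y) →ₗ[k] (Y ⟶ X⟦(d - 1 : ℤ)⟧) →ₗ[k] k,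
      (∀ (X0 X1 X2 : D) (u : X0 ⟶ X1) (f : X1 ⟶ X2) (g : X2 ⟶ X0⟦(d - 1 : ℤ)⟧),
        γ X0 X2 (u ≫ f) g = γ X1 X2 f (g ≫ u⟦(d - 1 : ℤ)⟧')) ∧
      (∀ (X1 X2 X3 : D) (f : X1 ⟶ X2) (v : X2 ⟶ X3) (g : X3 ⟶ X1⟦(d - 1 : ℤ)⟧),
        γ X1 X3 (f ≫ v) g = γ X1 X2 f (v ≫ g)) ∧
      -- the pretrace of `γ` at `X` takes the fraction `f ∘ s⁻¹` (i.e. the unique morphism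
      -- `g : Q X ⟶ (Q X)⟦d-1⟧` with `Q(s) ≫ g = Q(f)`) to `t_NN((Σ^{d-1} b) ∘ f ∘ a)`:
      (∀ (NN X' X : T) (hNN : N.P NN) (a : NN ⟶ X') (s : X' ⟶ X) (b : X ⟶ NN⟦(1 : ℤ)⟧),
        Triangle.mk a s b ∈ (distTriang T) →
        ∀ (f : X' ⟶ X⟦(d - 1 : ℤ)⟧) (g : Q.obj X ⟶ (Q.obj X)⟦(d - 1 : ℤ)⟧),
          Q.map s ≫ g = Q.map f ≫ (Q.commShiftIso (d - 1 : ℤ)).hom.app X →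
          γ (Q.obj X) (Q.obj X) (𝟙 (Q.obj X)) g
            = β NN NN hNN hNN (𝟙 NN)
                (a ≫ f ≫ b⟦(d - 1 : ℤ)⟧' ≫
                  (shiftFunctorAdd' T 1 (d - 1) d (by omega)).inv.app NN)) := by
  obtain ⟨τ, hτ⟩ := AmiotAux.exists_tau N d β Q hβ₁ hβ₂
  haveI : Q.EssSurj := Localization.essSurj Q N.W
  have cycQ := AmiotAux.tau_cyc N d β Q hβ₁ hβ₂ τ hτ
  have conj : ∀ (X₀ X₁ : T) (e : Q.obj X₀ ≅ Q.obj X₁) (h : Q.obj X₁ ⟶ (Q.obj X₁)⟦(d - 1 : ℤ)⟧),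
      τ X₀ (e.hom ≫ h ≫ e.inv⟦(d - 1 : ℤ)⟧') = τ X₁ h := by
    intro X₀ X₁ e h
    have key := cycQ X₀ X₁ e.hom (h ≫ e.inv⟦(d - 1 : ℤ)⟧')
    rw [key, Category.assoc, ← Functor.map_comp, Iso.inv_hom_id, CategoryTheory.Functor.map_id]
    congr 1
    exact Category.comp_id _
  -- the pretrace form on `D`
  set tD : ∀ P : D, (P ⟶ P⟦(d - 1 : ℤ)⟧) → k := fun P h =>
    τ (Q.objPreimage P) ((Q.objObjPreimageIso P).hom ≫ h ≫
      ((Q.objObjPreimageIso P).inv)⟦(d - 1 : ℤ)⟧') with htD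
  have tDQ : ∀ (X : T) (h : Q.obj X ⟶ (Q.obj X)⟦(d - 1 : ℤ)⟧), tD (Q.obj X) h = τ X h := by
    intro X h
    simp only [htD]
    exact conj _ _ (Q.objObjPreimageIso (Q.obj X)) h
  have tDc : ∀ (P₁ P₂ : D) (p : P₁ ⟶ P₂) (q : P₂ ⟶ P₁⟦(d - 1 : ℤ)⟧),
      tD P₁ (p ≫ q) = tD P₂ (q ≫ p⟦(d - 1 : ℤ)⟧') := by
    intro P₁ P₂ p q
    have key := cycQ (Q.objPreimage P₁) (Q.objPreimage P₂)
      ((Q.objObjPreimageIso P₁).hom ≫ p ≫ (Q.objObjPreimageIso P₂).inv)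
      ((Q.objObjPreimageIso P₂).hom ≫ q ≫ ((Q.objObjPreimageIso P₁).inv)⟦(d - 1 : ℤ)⟧')
    have eL : ((Q.objObjPreimageIso P₁).hom ≫ p ≫ (Q.objObjPreimageIso P₂).inv) ≫
        ((Q.objObjPreimageIso P₂).hom ≫ q ≫ ((Q.objObjPreimageIso P₁).inv)⟦(d - 1 : ℤ)⟧')
        = (Q.objObjPreimageIso P₁).hom ≫ (p ≫ q) ≫
          ((Q.objObjPreimageIso P₁).inv)⟦(d - 1 : ℤ)⟧' := by
      simp
    have eR : ((Q.objObjPreimageIso P₂).hom ≫ q ≫ ((Q.objObjPreimageIso P₁).inv)⟦(d - 1 : ℤ)⟧') ≫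
        (((Q.objObjPreimageIso P₁).hom ≫ p ≫ (Q.objObjPreimageIso P₂).inv))⟦(d - 1 : ℤ)⟧'
        = (Q.objObjPreimageIso P₂).hom ≫ (q ≫ p⟦(d - 1 : ℤ)⟧') ≫
          ((Q.objObjPreimageIso P₂).inv)⟦(d - 1 : ℤ)⟧' := by
      simp [← Functor.map_comp]
    simp only [htD]
    rw [eL, eR] at key
    exact key
  have tDadd : ∀ (P : D) (h h' : P ⟶ P⟦(d - 1 : ℤ)⟧), tD P (h + h') = tD P h + tD P h' := by
    intro P h h'
    simp only [htD]
    have : (Q.objObjPreimageIso P).hom ≫ (h + h') ≫ ((Q.objObjPreimageIso P).inv)⟦(d - 1 : ℤ)⟧'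
        = ((Q.objObjPreimageIso P).hom ≫ h ≫ ((Q.objObjPreimageIso P).inv)⟦(d - 1 : ℤ)⟧')
          + ((Q.objObjPreimageIso P).hom ≫ h' ≫ ((Q.objObjPreimageIso P).inv)⟦(d - 1 : ℤ)⟧') := by
      rw [Preadditive.add_comp, Preadditive.comp_add]
    rw [this]
    exact AmiotAux.tau_add N d β Q τ hτ _ _ _
  have tDsmul : ∀ (P : D) (c : k) (h : P ⟶ P⟦(d - 1 : ℤ)⟧), tD P (c • h) = c • tD P h := by
    intro P c h
    simp only [htD]
    have : (Q.objObjPreimageIso P).hom ≫ (c • h) ≫ ((Q.objObjPreimageIso P).inv)⟦(d - 1 : ℤ)⟧'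
        = c • ((Q.objObjPreimageIso P).hom ≫ h ≫ ((Q.objObjPreimageIso P).inv)⟦(d - 1 : ℤ)⟧') := by
      rw [CategoryTheory.Linear.smul_comp, CategoryTheory.Linear.comp_smul]
    rw [this]
    exact AmiotAux.tau_smul N d β Q τ hτ _ _ _
  refine ⟨fun X Y => LinearMap.mk₂ k (fun f g => tD X (f ≫ g)) ?_ ?_ ?_ ?_, ⟨?_, ?_, ?_⟩, ?_⟩
  · intro f f' g
    rw [Preadditive.add_comp]
    exact tDadd _ _ _
  · intro c f g
    rw [CategoryTheory.Linear.smul_comp]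
    exact tDsmul _ _ _
  · intro f g g'
    rw [Preadditive.comp_add]
    exact tDadd _ _ _
  · intro f c g
    rw [CategoryTheory.Linear.comp_smul]
    exact tDsmul _ _ _
  · -- condition 1
    intro X0 X1 X2 u f g
    simp only [LinearMap.mk₂_apply]
    rw [Category.assoc, tDc X0 X1 u (f ≫ g), Category.assoc]
  · -- condition 2
    intro X1 X2 X3 f v g
    simp only [LinearMap.mk₂_apply, Category.assoc]
  · -- condition 3
    intro NN X' X hNN a s b hT f g hg
    simp only [LinearMap.mk₂_apply]
    rw [Category.id_comp, tDQ X g]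
    exact hτ X g NN X' hNN a s b hT f hg
  · -- uniqueness
    rintro γ' ⟨h1', h2', h3'⟩
    have cyc' : ∀ (P₁ P₂ : D) (p : P₁ ⟶ P₂) (q : P₂ ⟶ P₁⟦(d - 1 : ℤ)⟧),
        γ' P₁ P₁ (𝟙 P₁) (p ≫ q) = γ' P₂ P₂ (𝟙 P₂) (q ≫ p⟦(d - 1 : ℤ)⟧') := by
      intro P₁ P₂ p q
      have e1 := h2' P₁ P₁ P₂ (𝟙 P₁) p q
      rw [Category.id_comp] at e1
      have e2 := h1' P₁ P₂ P₂ p (𝟙 P₂) q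
      rw [Category.comp_id] at e2
      rw [← e1, e2]
    have at_image : ∀ (X : T) (h : Q.obj X ⟶ (Q.obj X)⟦(d - 1 : ℤ)⟧),
        γ' (Q.obj X) (Q.obj X) (𝟙 (Q.obj X)) h = τ X h := by
      intro X h
      obtain ⟨NN, X', hNN, a, s, b, hT, f, hg⟩ := AmiotAux.exists_sys N d Q X h
      rw [h3' NN X' X hNN a s b hT f h hg, hτ X h NN X' hNN a s b hT f hg]
    have hpt : ∀ (P : D) (h : P ⟶ P⟦(d - 1 : ℤ)⟧), γ' P P (𝟙 P) h = tD P h := by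
      intro P h
      have c1 := cyc' (Q.obj (Q.objPreimage P)) P (Q.objObjPreimageIso P).hom
        (h ≫ ((Q.objObjPreimageIso P).inv)⟦(d - 1 : ℤ)⟧')
      have crid : (h ≫ ((Q.objObjPreimageIso P).inv)⟦(d - 1 : ℤ)⟧') ≫
          ((Q.objObjPreimageIso P).hom)⟦(d - 1 : ℤ)⟧' = h := by
        rw [Category.assoc, ← Functor.map_comp, Iso.inv_hom_id, CategoryTheory.Functor.map_id]
        exact Category.comp_id _
      rw [crid] at c1
      rw [← c1, at_image]
    funext X Y
    refine LinearMap.ext fun f => LinearMap.ext fun g => ?_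
    have e := h2' X X Y (𝟙 X) f g
    rw [Category.id_comp] at e
    rw [e]
    simp only [LinearMap.mk₂_apply]
    exact hpt X (f ≫ g)
end

section
/- (Well-definedness part of the homotopy snake lemma) Let (B, A, C, i, p, h) be a homotopy short exact sequence of complexes of abelian groups, and let q be an integer. Suppose c, c' ∈ Cᵠ are cocycles with c − c' ∈ d(Cᵠ⁻¹). Suppose a ∈ Aᵠ and b ∈ Bᵠ⁺¹ satisfy d(b) = 0, d(a) + i(b) = 0 and p(a) + h(b) − c ∈ d(Cᵠ⁻¹), and similarly a' ∈ Aᵠ and b' ∈ Bᵠ⁺¹ satisfy d(b') = 0, d(a') + i(b') = 0 and p(a') + h(b') − c' ∈ d(Cᵠ⁻¹). Then b − b' ∈ d(Bᵠ). -/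
/-- **Well-definedness part of the homotopy snake lemma.**
Let `(B, A, C, i, p, h)` be a homotopy short exact sequence of cochain complexes of abelian
groups: `i`, `p` are chain maps, `h` is homogeneous of degree `-1` (components
`h n : B (n+1) →+ C n`) with `d ∘ h + h ∘ d = p ∘ i`, and the twisted total complex — with
degree-`n` component `Cⁿ⁻¹ ⊕ Aⁿ ⊕ Bⁿ⁺¹` and differential
`D(c, a, b) = (-d(c) + p(a) + h(b), d(a) + i(b), -d(b))` — is acyclic.
Suppose `c, c' ∈ Cᵠ` are cocycles with `c - c' ∈ d(Cᵠ⁻¹)`, and `a ∈ Aᵠ`, `b ∈ Bᵠ⁺¹`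
(resp. `a'`, `b'`) satisfy `d(b) = 0`, `d(a) + i(b) = 0` and `p(a) + h(b) - c ∈ d(Cᵠ⁻¹)`
(resp. the analogous conditions with respect to `c'`).  Then `b - b' ∈ d(Bᵠ)`.
(Degrees are shifted by one: the statement below is for `c, c' ∈ C^{q+1}`, `q ∈ ℤ`.) -/
theorem homotopy_snake_well_defined
    (B A C : ℤ → Type*)
    [∀ n, AddCommGroup (B n)] [∀ n, AddCommGroup (A n)] [∀ n, AddCommGroup (C n)]
    (dB : ∀ n, B n →+ B (n + 1)) (dA : ∀ n, A n →+ A (n + 1)) (dC : ∀ n, C n →+ C (n + 1))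
    (dB_sq : ∀ n (x : B n), dB (n + 1) (dB n x) = 0)
    (dA_sq : ∀ n (x : A n), dA (n + 1) (dA n x) = 0)
    (dC_sq : ∀ n (x : C n), dC (n + 1) (dC n x) = 0)
    (i : ∀ n, B n →+ A n) (p : ∀ n, A n →+ C n)
    (hi : ∀ n (x : B n), dA n (i n x) = i (n + 1) (dB n x))
    (hp : ∀ n (x : A n), dC n (p n x) = p (n + 1) (dA n x))
    (h : ∀ n, B (n + 1) →+ C n)
    (hh : ∀ n (x : B (n + 1)), dC n (h n x) + h (n + 1) (dB (n + 1) x) = p (n + 1) (i (n + 1) x))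
    -- acyclicity of the twisted total complex:
    (acyclic : ∀ (q : ℤ) (c : C (q + 1)) (a : A (q + 1 + 1)) (b : B (q + 1 + 1 + 1)),
      -(dC (q + 1) c) + p (q + 1 + 1) a + h (q + 1 + 1) b = 0 →
      dA (q + 1 + 1) a + i (q + 1 + 1 + 1) b = 0 →
      -(dB (q + 1 + 1 + 1) b) = 0 →
      ∃ (c₀ : C q) (a₀ : A (q + 1)) (b₀ : B (q + 1 + 1)),
        -(dC q c₀) + p (q + 1) a₀ + h (q + 1) b₀ = c ∧
        dA (q + 1) a₀ + i (q + 1 + 1) b₀ = a ∧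
        -(dB (q + 1 + 1) b₀) = b)
    (q : ℤ)
    -- the two cohomologous cocycles `c` and `c'`:
    (c c' : C (q + 1)) (hc : dC (q + 1) c = 0) (hc' : dC (q + 1) c' = 0)
    (hcc' : ∃ c₀ : C q, c - c' = dC q c₀)
    -- the data `(a, b)` for `c`:
    (a : A (q + 1)) (b : B (q + 1 + 1))
    (hb : dB (q + 1 + 1) b = 0)
    (hab : dA (q + 1) a + i (q + 1 + 1) b = 0)
    (habc : ∃ c₀ : C q, p (q + 1) a + h (q + 1) b - c = dC q c₀)
    -- the data `(a', b')` for `c'`: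
    (a' : A (q + 1)) (b' : B (q + 1 + 1))
    (hb' : dB (q + 1 + 1) b' = 0)
    (hab' : dA (q + 1) a' + i (q + 1 + 1) b' = 0)
    (habc' : ∃ c₀ : C q, p (q + 1) a' + h (q + 1) b' - c' = dC q c₀) :
    ∃ b₀ : B (q + 1), dB (q + 1) b₀ = b - b' := by
  obtain ⟨e₀, he₀⟩ := hcc'
  obtain ⟨e₁, he₁⟩ := habc
  obtain ⟨e₂, he₂⟩ := habc'
  obtain ⟨r, rfl⟩ : ∃ r : ℤ, q = r + 1 := ⟨q - 1, by ring⟩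
  obtain ⟨c₀, a₀, b₀, h1, h2, h3⟩ :=
    acyclic r (e₁ - e₂ + e₀) (a - a') (b - b')
      (by
        simp only [map_sub, map_add, ← he₀, ← he₁, ← he₂]
        abel)
      (by
        simp only [map_sub]
        have : dA (r + 1 + 1) a - dA (r + 1 + 1) a' + (i (r + 1 + 1 + 1) b - i (r + 1 + 1 + 1) b') =
            (dA (r + 1 + 1) a + i (r + 1 + 1 + 1) b) - (dA (r + 1 + 1) a' + i (r + 1 + 1 + 1) b') := by abel
        rw [this, hab, hab', sub_zero]
      )
      (by simp [map_sub, hb, hb'])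
  exact ⟨-b₀, by rw [map_neg, h3]⟩
end

section
/- (Homotopy snake lemma) Let (B, A, C, i, p, h) be a homotopy short exact sequence of complexes of abelian groups and q an integer. Then there is a unique group homomorphism δ : Hᵠ(C) → Hᵠ⁺¹(B) with the following property: for every cocycle c ∈ Cᵠ and every cocycle b ∈ Bᵠ⁺¹, one has δ([c]) = −[b] if and only if there exists a ∈ Aᵠ such that d(a) + i(b) = 0 and p(a) + h(b) − c ∈ d(Cᵠ⁻¹). -/
/-- The `(q+1)`-st cohomology group of a cochain complex `(M, dM)` of abelian groups:
cocycles in degree `q+1` modulo coboundaries coming from degree `q`. -/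
abbrev Hgroup (M : ℤ → Type*) [∀ n, AddCommGroup (M n)]
    (dM : ∀ n, M n →+ M (n + 1)) (q : ℤ) : Type _ :=
  ↥(AddMonoidHom.ker (dM (q + 1))) ⧸
    ((AddMonoidHom.range (dM q)).addSubgroupOf (AddMonoidHom.ker (dM (q + 1))))

/-- The cohomology class of a cocycle. -/
abbrev Hmk (M : ℤ → Type*) [∀ n, AddCommGroup (M n)]
    (dM : ∀ n, M n →+ M (n + 1)) (q : ℤ)
    (x : M (q + 1)) (hx : dM (q + 1) x = 0) : Hgroup M dM q :=
  QuotientAddGroup.mk ⟨x, AddMonoidHom.mem_ker.mpr hx⟩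

/-- **Homotopy snake lemma.**
Let `(B, A, C, i, p, h)` be a homotopy short exact sequence of cochain complexes of abelian
groups: `i`, `p` are chain maps, `h` is homogeneous of degree `-1` (components
`h n : B (n+1) →+ C n`) with `d ∘ h + h ∘ d = p ∘ i`, and the twisted total complex — with
degree-`n` component `Cⁿ⁻¹ ⊕ Aⁿ ⊕ Bⁿ⁺¹` and differential
`D(c, a, b) = (-d(c) + p(a) + h(b), d(a) + i(b), -d(b))` — is acyclic.
Then for every integer `q` there is a unique group homomorphism `δ : Hᵠ(C) → Hᵠ⁺¹(B)` such that,
for all cocycles `c ∈ Cᵠ` and `b ∈ Bᵠ⁺¹`, one has `δ([c]) = -[b]` if and only if there exists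
`a ∈ Aᵠ` with `d(a) + i(b) = 0` and `p(a) + h(b) - c ∈ d(Cᵠ⁻¹)`.
(Degrees are shifted by one: the statement below gives `δ : H^{q+1}(C) → H^{q+2}(B)`, `q ∈ ℤ`.) -/
theorem homotopy_snake_lemma
    (B A C : ℤ → Type*)
    [∀ n, AddCommGroup (B n)] [∀ n, AddCommGroup (A n)] [∀ n, AddCommGroup (C n)]
    (dB : ∀ n, B n →+ B (n + 1)) (dA : ∀ n, A n →+ A (n + 1)) (dC : ∀ n, C n →+ C (n + 1))
    (dB_sq : ∀ n (x : B n), dB (n + 1) (dB n x) = 0)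
    (dA_sq : ∀ n (x : A n), dA (n + 1) (dA n x) = 0)
    (dC_sq : ∀ n (x : C n), dC (n + 1) (dC n x) = 0)
    (i : ∀ n, B n →+ A n) (p : ∀ n, A n →+ C n)
    (hi : ∀ n (x : B n), dA n (i n x) = i (n + 1) (dB n x))
    (hp : ∀ n (x : A n), dC n (p n x) = p (n + 1) (dA n x))
    (h : ∀ n, B (n + 1) →+ C n)
    (hh : ∀ n (x : B (n + 1)), dC n (h n x) + h (n + 1) (dB (n + 1) x) = p (n + 1) (i (n + 1) x))
    -- acyclicity of the twisted total complex:
    (acyclic : ∀ (q : ℤ) (c : C (q + 1)) (a : A (q + 1 + 1)) (b : B (q + 1 + 1 + 1)),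
      -(dC (q + 1) c) + p (q + 1 + 1) a + h (q + 1 + 1) b = 0 →
      dA (q + 1 + 1) a + i (q + 1 + 1 + 1) b = 0 →
      -(dB (q + 1 + 1 + 1) b) = 0 →
      ∃ (c₀ : C q) (a₀ : A (q + 1)) (b₀ : B (q + 1 + 1)),
        -(dC q c₀) + p (q + 1) a₀ + h (q + 1) b₀ = c ∧
        dA (q + 1) a₀ + i (q + 1 + 1) b₀ = a ∧
        -(dB (q + 1 + 1) b₀) = b)
    (q : ℤ) :
    ∃! δ : Hgroup C dC q →+ Hgroup B dB (q + 1),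
      ∀ (c : C (q + 1)) (hc : dC (q + 1) c = 0)
        (b : B (q + 1 + 1)) (hb : dB (q + 1 + 1) b = 0),
        (δ (Hmk C dC q c hc) = - Hmk B dB (q + 1) b hb ↔
          ∃ a : A (q + 1), dA (q + 1) a + i (q + 1 + 1) b = 0 ∧
            ∃ c₀ : C q, p (q + 1) a + h (q + 1) b - c = dC q c₀) := by
  classical
  obtain ⟨r, rfl⟩ : ∃ r, q = r + 1 := ⟨q - 1, by ring⟩
  -- Key cancellation lemma (uses acyclicity at index r)
  have K : ∀ (c c' : C (r+1+1)) (b b' : B (r+1+1+1)),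
      dB (r+1+1+1) b = 0 → dB (r+1+1+1) b' = 0 →
      (∃ a : A (r+1+1), dA (r+1+1) a + i (r+1+1+1) b = 0 ∧
        ∃ c₀ : C (r+1), p (r+1+1) a + h (r+1+1) b - c = dC (r+1) c₀) →
      (∃ a : A (r+1+1), dA (r+1+1) a + i (r+1+1+1) b' = 0 ∧
        ∃ c₀ : C (r+1), p (r+1+1) a + h (r+1+1) b' - c' = dC (r+1) c₀) →
      (∃ c₁ : C (r+1), dC (r+1) c₁ = c - c') →
      ∃ b₁ : B (r+1+1), dB (r+1+1) b₁ = b - b' := by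
    rintro c c' b b' hb hb' ⟨a, ha, c₀, hc₀⟩ ⟨a', ha', c₀', hc₀'⟩ ⟨c₁, hc₁⟩
    obtain ⟨x₀, y₀, z₀, -, -, hz⟩ := acyclic r (c₀ - c₀' + c₁) (a - a') (b - b')
      (by simp only [map_sub, map_add]
          rw [← hc₀, ← hc₀', hc₁]; abel)
      (by simp only [map_sub]
          rw [sub_add_sub_comm, ha, ha', sub_zero])
      (by simp only [map_sub, hb, hb', sub_zero, neg_zero])
    exact ⟨-z₀, by rw [map_neg]; exact hz⟩
  -- Existence of a connecting cocycle (uses acyclicity at index r+1)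
  have E : ∀ (c : C (r+1+1)), dC (r+1+1) c = 0 →
      ∃ b : B (r+1+1+1), dB (r+1+1+1) b = 0 ∧
        ∃ a : A (r+1+1), dA (r+1+1) a + i (r+1+1+1) b = 0 ∧
          ∃ c₀ : C (r+1), p (r+1+1) a + h (r+1+1) b - c = dC (r+1) c₀ := by
    intro c hc
    obtain ⟨c₀, a₀, b₀, h1, h2, h3⟩ := acyclic (r+1) c 0 0
      (by simp [hc]) (by simp) (by simp)
    refine ⟨b₀, by rwa [neg_eq_zero] at h3, a₀, h2, c₀, ?_⟩
    rw [← h1]; abel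
  choose bsel hbsel asel hasel csel hcsel using E
  have memker : ∀ (c : C (r+1+1)) (hc : dC (r+1+1) c = 0),
      bsel c hc ∈ AddMonoidHom.ker (dB (r+1+1+1)) := fun c hc =>
    AddMonoidHom.mem_ker.mpr (hbsel c hc)
  -- the map on cocycles
  set F : ↥(AddMonoidHom.ker (dC (r+1+1))) →+ Hgroup B dB (r+1+1) :=
    AddMonoidHom.mk'
      (fun s => - QuotientAddGroup.mk
          ⟨bsel s.1 (AddMonoidHom.mem_ker.mp s.2), memker _ _⟩)
      (by
        rintro ⟨c, hc⟩ ⟨c', hc'⟩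
        have hc0 : dC (r+1+1) c = 0 := AddMonoidHom.mem_ker.mp hc
        have hc0' : dC (r+1+1) c' = 0 := AddMonoidHom.mem_ker.mp hc'
        have hcc' : dC (r+1+1) (c + c') = 0 := by rw [map_add, hc0, hc0', add_zero]
        obtain ⟨b₁, hb₁⟩ := K (c + c') (c + c') (bsel (c + c') hcc')
            (bsel c hc0 + bsel c' hc0')
            (hbsel _ hcc')
            (by rw [map_add, hbsel _ hc0, hbsel _ hc0', add_zero])
            ⟨asel _ hcc', hasel _ hcc', csel _ hcc', hcsel _ hcc'⟩
            ⟨asel c hc0 + asel c' hc0', by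
                rw [map_add, map_add, add_add_add_comm, hasel, hasel, add_zero],
              csel c hc0 + csel c' hc0', by
                rw [map_add, map_add, map_add, ← hcsel c hc0, ← hcsel c' hc0']
                abel⟩
            ⟨0, by simp⟩
        show -(QuotientAddGroup.mk ⟨bsel (c + c') hcc', memker _ hcc'⟩ :
              Hgroup B dB (r+1+1)) =
          -(QuotientAddGroup.mk ⟨bsel c hc0, memker _ hc0⟩ : Hgroup B dB (r+1+1))
            + -(QuotientAddGroup.mk ⟨bsel c' hc0', memker _ hc0'⟩ : Hgroup B dB (r+1+1))
        rw [← neg_add, neg_inj, ← QuotientAddGroup.mk_add, QuotientAddGroup.eq,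
          AddSubgroup.mem_addSubgroupOf]
        refine ⟨-b₁, ?_⟩
        show dB (r+1+1) (-b₁) = -(bsel (c + c') hcc') + (bsel c hc0 + bsel c' hc0')
        rw [map_neg, hb₁]; abel)
  have hker : (AddMonoidHom.range (dC (r+1))).addSubgroupOf
      (AddMonoidHom.ker (dC (r+1+1))) ≤ F.ker := by
    rintro ⟨c, hc⟩ hmem
    rw [AddSubgroup.mem_addSubgroupOf] at hmem
    obtain ⟨c₁, hc₁⟩ := hmem
    have hc0 : dC (r+1+1) c = 0 := AddMonoidHom.mem_ker.mp hc
    rw [AddMonoidHom.mem_ker]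
    show -(QuotientAddGroup.mk ⟨bsel c hc0, memker c hc0⟩ : Hgroup B dB (r+1+1)) = 0
    rw [neg_eq_zero]
    obtain ⟨b₁, hb₁⟩ := K c c (bsel c hc0) 0 (hbsel c hc0) (map_zero _)
      ⟨asel c hc0, hasel c hc0, csel c hc0, hcsel c hc0⟩
      ⟨0, by simp, -c₁, by rw [map_neg, hc₁]; simp⟩
      ⟨0, by simp⟩
    rw [QuotientAddGroup.eq_zero_iff, AddSubgroup.mem_addSubgroupOf]
    refine ⟨b₁, ?_⟩
    show dB (r+1+1) b₁ = bsel c hc0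
    rw [hb₁, sub_zero]
  set δ : Hgroup C dC (r+1) →+ Hgroup B dB (r+1+1) := QuotientAddGroup.lift _ F hker
  have hδmk : ∀ (c : C (r+1+1)) (hc : dC (r+1+1) c = 0),
      δ (Hmk C dC (r+1) c hc)
        = - QuotientAddGroup.mk ⟨bsel c hc, memker c hc⟩ := fun c hc => rfl
  have hPδ : ∀ (c : C (r+1+1)) (hc : dC (r+1+1) c = 0)
      (b : B (r+1+1+1)) (hb : dB (r+1+1+1) b = 0),
      (δ (Hmk C dC (r+1) c hc) = - Hmk B dB (r+1+1) b hb ↔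
        ∃ a : A (r+1+1), dA (r+1+1) a + i (r+1+1+1) b = 0 ∧
          ∃ c₀ : C (r+1), p (r+1+1) a + h (r+1+1) b - c = dC (r+1) c₀) := by
    intro c hc b hb
    rw [hδmk c hc]
    constructor
    · intro heq
      rw [neg_inj, QuotientAddGroup.eq, AddSubgroup.mem_addSubgroupOf] at heq
      obtain ⟨b₁, hb₁⟩ := heq
      have hb₁' : dB (r+1+1) b₁ = -(bsel c hc) + b := hb₁
      refine ⟨asel c hc - i (r+1+1) b₁, ?_, csel c hc - h (r+1) b₁, ?_⟩
      · rw [map_sub, hi (r+1+1) b₁, hb₁', map_add, map_neg, ← hasel c hc]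
        abel
      · rw [map_sub, map_sub, ← hh (r+1) b₁, hb₁', map_add, map_neg,
          ← hcsel c hc]
        abel
    · rintro ⟨a, ha, c₀, hc₀⟩
      rw [neg_inj, QuotientAddGroup.eq, AddSubgroup.mem_addSubgroupOf]
      obtain ⟨b₁, hb₁⟩ := K c c b (bsel c hc) hb (hbsel c hc)
        ⟨a, ha, c₀, hc₀⟩
        ⟨asel c hc, hasel c hc, csel c hc, hcsel c hc⟩
        ⟨0, by simp⟩
      refine ⟨b₁, ?_⟩
      show dB (r+1+1) b₁ = -(bsel c hc) + b
      rw [hb₁]; abel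
  refine ⟨δ, hPδ, ?_⟩
  intro δ' hδ'
  refine AddMonoidHom.ext fun x => ?_
  induction x using QuotientAddGroup.induction_on with
  | H z =>
    obtain ⟨c, hc⟩ := z
    have hc0 : dC (r+1+1) c = 0 := AddMonoidHom.mem_ker.mp hc
    have hR : ∃ a : A (r+1+1), dA (r+1+1) a + i (r+1+1+1) (bsel c hc0) = 0 ∧
        ∃ c₀ : C (r+1), p (r+1+1) a + h (r+1+1) (bsel c hc0) - c = dC (r+1) c₀ :=
      ⟨asel c hc0, hasel c hc0, csel c hc0, hcsel c hc0⟩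
    have h₁ := (hδ' c hc0 (bsel c hc0) (hbsel c hc0)).mpr hR
    have h₂ := (hPδ c hc0 (bsel c hc0) (hbsel c hc0)).mpr hR
    show δ' (Hmk C dC (r+1) c hc0) = δ (Hmk C dC (r+1) c hc0)
    rw [h₁, h₂]
end

section
/- (Long exact cohomology sequence of a homotopy short exact sequence) Let (B, A, C, i, p, h) be a homotopy short exact sequence of complexes of abelian groups. For each integer q let δ : Hᵠ(C) → Hᵠ⁺¹(B) be the connecting homomorphism characterized by: δ([c]) = −[b] if and only if there exists a ∈ Aᵠ with d(a) + i(b) = 0 and p(a) + h(b) − c ∈ d(Cᵠ⁻¹) (for cocycles c ∈ Cᵠ, b ∈ Bᵠ⁺¹). Then for every integer q the sequence Hᵠ(B) → Hᵠ(A) → Hᵠ(C) → Hᵠ⁺¹(B) → Hᵠ⁺¹(A), with the first two maps induced by i and p and the middle-to-last map being δ, is exact at Hᵠ(A), at Hᵠ(C) and at Hᵠ⁺¹(B). -/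
section Helpers

variable (M : ℤ → Type*) [∀ n, AddCommGroup (M n)]
    (dM : ∀ n, M n →+ M (n + 1)) (q : ℤ)

theorem Hmk_eq_zero_iff (x : M (q + 1)) (hx : dM (q + 1) x = 0) :
    Hmk M dM q x hx = 0 ↔ ∃ y, dM q y = x := by
  rw [QuotientAddGroup.eq_zero_iff, AddSubgroup.mem_addSubgroupOf]
  simp [AddMonoidHom.mem_range]

theorem Hmk_sub (x y : M (q + 1)) (hx : dM (q + 1) x = 0) (hy : dM (q + 1) y = 0) :
    Hmk M dM q x hx - Hmk M dM q y hy =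
      Hmk M dM q (x - y) (by rw [map_sub, hx, hy, sub_zero]) := rfl

theorem Hmk_eq_iff (x y : M (q + 1)) (hx : dM (q + 1) x = 0) (hy : dM (q + 1) y = 0) :
    Hmk M dM q x hx = Hmk M dM q y hy ↔ ∃ z, dM q z = x - y := by
  rw [← sub_eq_zero, Hmk_sub, Hmk_eq_zero_iff]

theorem Hmk_neg (x : M (q + 1)) (hx : dM (q + 1) x = 0) :
    Hmk M dM q (-x) (by rw [map_neg, hx, neg_zero]) = - Hmk M dM q x hx := rfl

theorem Hmk_zero : Hmk M dM q 0 (map_zero _) = 0 := rfl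

end Helpers

/-- **Long exact cohomology sequence of a homotopy short exact sequence.**
Let `(B, A, C, i, p, h)` be a homotopy short exact sequence of cochain complexes of abelian
groups: `i`, `p` are chain maps, `h` is homogeneous of degree `-1` (components
`h n : B (n+1) →+ C n`) with `d ∘ h + h ∘ d = p ∘ i`, and the twisted total complex — with
degree-`n` component `Cⁿ⁻¹ ⊕ Aⁿ ⊕ Bⁿ⁺¹` and differential
`D(c, a, b) = (-d(c) + p(a) + h(b), d(a) + i(b), -d(b))` — is acyclic.  For `q ∈ ℤ` let
`δ : Hᵠ(C) → Hᵠ⁺¹(B)` be the connecting homomorphism characterized by: `δ([c]) = -[b]` iff there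
is `a ∈ Aᵠ` with `d(a) + i(b) = 0` and `p(a) + h(b) - c ∈ d(Cᵠ⁻¹)`.  Then the sequence
`Hᵠ(B) → Hᵠ(A) → Hᵠ(C) → Hᵠ⁺¹(B) → Hᵠ⁺¹(A)` — first two maps induced by `i` and `p`, third map
`δ` — is exact at `Hᵠ(A)`, at `Hᵠ(C)` and at `Hᵠ⁺¹(B)`; exactness is expressed below on
representing cocycles (every cohomology class being the class of a cocycle).
(Degrees are shifted by one: the statement below is at `H^{q+1}` and `H^{q+2}`, `q ∈ ℤ`.) -/
theorem homotopy_snake_long_exact_sequence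
    (B A C : ℤ → Type*)
    [∀ n, AddCommGroup (B n)] [∀ n, AddCommGroup (A n)] [∀ n, AddCommGroup (C n)]
    (dB : ∀ n, B n →+ B (n + 1)) (dA : ∀ n, A n →+ A (n + 1)) (dC : ∀ n, C n →+ C (n + 1))
    (dB_sq : ∀ n (x : B n), dB (n + 1) (dB n x) = 0)
    (dA_sq : ∀ n (x : A n), dA (n + 1) (dA n x) = 0)
    (dC_sq : ∀ n (x : C n), dC (n + 1) (dC n x) = 0)
    (i : ∀ n, B n →+ A n) (p : ∀ n, A n →+ C n)
    (hi : ∀ n (x : B n), dA n (i n x) = i (n + 1) (dB n x))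
    (hp : ∀ n (x : A n), dC n (p n x) = p (n + 1) (dA n x))
    (h : ∀ n, B (n + 1) →+ C n)
    (hh : ∀ n (x : B (n + 1)), dC n (h n x) + h (n + 1) (dB (n + 1) x) = p (n + 1) (i (n + 1) x))
    -- acyclicity of the twisted total complex:
    (acyclic : ∀ (q : ℤ) (c : C (q + 1)) (a : A (q + 1 + 1)) (b : B (q + 1 + 1 + 1)),
      -(dC (q + 1) c) + p (q + 1 + 1) a + h (q + 1 + 1) b = 0 →
      dA (q + 1 + 1) a + i (q + 1 + 1 + 1) b = 0 →
      -(dB (q + 1 + 1 + 1) b) = 0 →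
      ∃ (c₀ : C q) (a₀ : A (q + 1)) (b₀ : B (q + 1 + 1)),
        -(dC q c₀) + p (q + 1) a₀ + h (q + 1) b₀ = c ∧
        dA (q + 1) a₀ + i (q + 1 + 1) b₀ = a ∧
        -(dB (q + 1 + 1) b₀) = b)
    (q : ℤ)
    -- the connecting homomorphism `δ` with its characterization:
    (δ : Hgroup C dC q →+ Hgroup B dB (q + 1))
    (hδ : ∀ (c : C (q + 1)) (hc : dC (q + 1) c = 0)
        (b : B (q + 1 + 1)) (hb : dB (q + 1 + 1) b = 0),
      (δ (Hmk C dC q c hc) = - Hmk B dB (q + 1) b hb ↔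
        ∃ a : A (q + 1), dA (q + 1) a + i (q + 1 + 1) b = 0 ∧
          ∃ c₀ : C q, p (q + 1) a + h (q + 1) b - c = dC q c₀)) :
    -- exactness at `Hᵠ(A)`:
    (∀ (a : A (q + 1)) (ha : dA (q + 1) a = 0),
      Hmk C dC q (p (q + 1) a) (by rw [hp, ha, map_zero]) = 0 ↔
        ∃ (b : B (q + 1)) (hb : dB (q + 1) b = 0),
          Hmk A dA q (i (q + 1) b) (by rw [hi, hb, map_zero]) = Hmk A dA q a ha) ∧
    -- exactness at `Hᵠ(C)`:
    (∀ (c : C (q + 1)) (hc : dC (q + 1) c = 0),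
      δ (Hmk C dC q c hc) = 0 ↔
        ∃ (a : A (q + 1)) (ha : dA (q + 1) a = 0),
          Hmk C dC q (p (q + 1) a) (by rw [hp, ha, map_zero]) = Hmk C dC q c hc) ∧
    -- exactness at `Hᵠ⁺¹(B)`:
    (∀ (b : B (q + 1 + 1)) (hb : dB (q + 1 + 1) b = 0),
      Hmk A dA (q + 1) (i (q + 1 + 1) b) (by rw [hi, hb, map_zero]) = 0 ↔
        ∃ (c : C (q + 1)) (hc : dC (q + 1) c = 0),
          δ (Hmk C dC q c hc) = Hmk B dB (q + 1) b hb) := by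
  refine ⟨?_, ?_, ?_⟩
  · -- exactness at H^{q+1}(A)
    intro a ha
    constructor
    · intro h0
      rw [Hmk_eq_zero_iff] at h0
      obtain ⟨c₀, hc₀⟩ := h0
      clear hδ δ
      obtain ⟨r, rfl⟩ : ∃ r, q = r + 1 := ⟨q - 1, by omega⟩
      obtain ⟨c', a', b', _, h2, h3⟩ :=
        acyclic r c₀ a 0
          (by rw [map_zero, add_zero, hc₀, neg_add_cancel])
          (by rw [map_zero, add_zero, ha])
          (by rw [map_zero, neg_zero])
      refine ⟨b', neg_eq_zero.mp h3, ?_⟩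
      rw [Hmk_eq_iff]
      exact ⟨-a', by rw [map_neg, eq_sub_of_add_eq h2, neg_sub]⟩
    · rintro ⟨b, hb, hba⟩
      rw [Hmk_eq_iff] at hba
      obtain ⟨z, hz⟩ := hba
      rw [Hmk_eq_zero_iff]
      have e1 : p (q + 1) (i (q + 1) b) = dC q (h q b) := by
        have := hh q b
        rw [hb, map_zero, add_zero] at this
        exact this.symm
      refine ⟨h q b - p q z, ?_⟩
      rw [map_sub, ← e1, hp, hz, map_sub]
      abel
  · -- exactness at H^{q+1}(C)
    intro c hc
    have key := hδ c hc 0 (map_zero _)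
    rw [Hmk_zero, neg_zero] at key
    rw [key]
    constructor
    · rintro ⟨a, ha1, c₀, hc₀⟩
      rw [map_zero, add_zero] at ha1
      rw [map_zero, add_zero] at hc₀
      exact ⟨a, ha1, (Hmk_eq_iff _ _ _ _ _ _ _).mpr ⟨c₀, hc₀.symm⟩⟩
    · rintro ⟨a, ha, hpa⟩
      rw [Hmk_eq_iff] at hpa
      obtain ⟨z, hz⟩ := hpa
      exact ⟨a, by rw [map_zero, add_zero, ha],
        ⟨z, by rw [map_zero, add_zero, hz]⟩⟩
  · -- exactness at H^{q+2}(B)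
    intro b hb
    have hnb : dB (q + 1 + 1) (-b) = 0 := by rw [map_neg, hb, neg_zero]
    have hkey : ∀ (c : C (q + 1)) (hc : dC (q + 1) c = 0),
        (δ (Hmk C dC q c hc) = Hmk B dB (q + 1) b hb ↔
          ∃ a : A (q + 1), dA (q + 1) a + i (q + 1 + 1) (-b) = 0 ∧
            ∃ c₀ : C q, p (q + 1) a + h (q + 1) (-b) - c = dC q c₀) := by
      intro c hc
      rw [← hδ c hc (-b) hnb, Hmk_neg, neg_neg]
    constructor
    · intro h0
      rw [Hmk_eq_zero_iff] at h0
      obtain ⟨a, ha⟩ := h0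
      have e1 : dC (q + 1) (h (q + 1) b) = p (q + 1 + 1) (i (q + 1 + 1) b) := by
        have := hh (q + 1) b
        rw [hb, map_zero, add_zero] at this
        exact this
      have hc : dC (q + 1) (p (q + 1) a - h (q + 1) b) = 0 := by
        rw [map_sub, e1, hp, ha, sub_self]
      refine ⟨p (q + 1) a - h (q + 1) b, hc, ?_⟩
      rw [hkey]
      refine ⟨a, by rw [map_neg, ha, add_neg_cancel], 0, ?_⟩
      rw [map_neg, map_zero]
      abel
    · rintro ⟨c, hc, hδc⟩
      rw [hkey] at hδc
      obtain ⟨a, ha1, -⟩ := hδc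
      rw [map_neg] at ha1
      rw [Hmk_eq_zero_iff]
      exact ⟨a, by rw [eq_sub_of_add_eq ha1, zero_sub, neg_neg]⟩
end
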